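/- arXiv:2006.00584 — 4 statements merged into one kernel-verified Lean document; each statement's English description precedes it below -/
import Mathlib

section
/- Let agents 1,...,n each have an M-level regular quantizer with cells R_i^k = (a_i^{k-1}, a_i^k] and words y_i^k, and suppose they share a vocabulary: for every k, the intersection ∩_i (a_i^{k-1}, a_i^k) is nonempty and contains all words y_i^k, i = 1,...,n. Then for any x and any sequence of agents i_1, ..., i_m forming a communication chain (each agent applying her own quantizer to the previous agent's word, with no noise), the resulting word after the chain lies within the interval [max_i a_i^{k-1}, min_i a_i^k] whenever x is mapped to word index k by the first agent; in particular the translation error |y_{i_m}^k − y_{i_1}^k| is bounded by min_i a_i^k − max_i a_i^{k-1}, independently of the chain length and path. -/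
open Set

/-- A regular quantizer with cell boundaries `a`, words `y` and `M` levels maps a signal `x`
to the word `w` if `x` lies in the `k`-th cell `(a k, a (k+1)]` and `w = y k`. -/
def Quantizes (a y : ℕ → ℝ) (M : ℕ) (x w : ℝ) : Prop :=
  ∃ k < M, x ∈ Set.Ioc (a k) (a (k + 1)) ∧ w = y k

/-- Monotonicity of boundaries up to `M`. -/
lemma quant_mono (a : ℕ → ℝ) (M : ℕ) (hmono : ∀ k < M, a k < a (k + 1)) :
    ∀ k' ≤ M, ∀ k ≤ k', a k ≤ a k' := by
  intro k' hk'
  induction k' with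
  | zero => intro k hk; have : k = 0 := Nat.le_zero.mp hk; simp [this]
  | succ p ih =>
    intro k hk
    rcases Nat.lt_or_ge k (p + 1) with h | h
    · exact le_trans (ih (le_of_lt hk') k (Nat.lt_succ_iff.mp h))
        (le_of_lt (hmono p (Nat.lt_of_succ_le hk')))
    · have : k = p + 1 := le_antisymm hk h
      simp [this]

/-- Uniqueness of the cell index. -/
lemma quant_unique (a : ℕ → ℝ) (M : ℕ) (hmono : ∀ k < M, a k < a (k + 1))
    (x : ℝ) (k k' : ℕ) (hk : k < M) (hk' : k' < M)
    (h1 : x ∈ Set.Ioc (a k) (a (k + 1))) (h2 : x ∈ Set.Ioc (a k') (a (k' + 1))) :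
    k = k' := by
  by_contra hne
  rcases Nat.lt_or_ge k k' with h | h
  · have : a (k + 1) ≤ a k' := quant_mono a M hmono k' (le_of_lt hk') (k+1) h
    linarith [h1.2, h2.1]
  · have hlt : k' < k := lt_of_le_of_ne h (Ne.symm hne)
    have : a (k' + 1) ≤ a k := quant_mono a M hmono k (le_of_lt hk) (k'+1) hlt
    linarith [h1.1, h2.2]

/-- If `n` agents with regular `M`-level quantizers share a vocabulary (each
agent's `k`-th word lies in every agent's `k`-th cell interior), then along any noiseless
communication chain starting from a signal `x` in the first agent's `k`-th cell, the final
word lies in `[max_i a i k, min_i a i (k+1)]`, and the translation error between the last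
word and the first agent's `k`-th word is bounded by `min_i a i (k+1) − max_i a i k`,
independently of the chain's length and path. -/
theorem shared_vocabulary_bounds_translation_loss
    (n : ℕ) (M : ℕ) (hM : 0 < M)
    (a : Fin n → ℕ → ℝ) (y : Fin n → ℕ → ℝ)
    (hreg0 : ∀ i, a i 0 = 0) (hregM : ∀ i, a i M = 1)
    (hmono : ∀ i, ∀ k < M, a i k < a i (k + 1))
    (hword : ∀ i, ∀ k < M, y i k ∈ Ioo (a i k) (a i (k + 1)))
    (hshared : ∀ i j, ∀ k < M, y j k ∈ Ioo (a i k) (a i (k + 1)))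
    (m : ℕ) (hm : 0 < m) (c : ℕ → Fin n)
    (x : ℝ) (w : ℕ → ℝ) (hw0 : w 0 = x)
    (hchain : ∀ t < m, Quantizes (a (c t)) (y (c t)) M (w t) (w (t + 1)))
    (k : ℕ) (hk : k < M)
    (hfirst : x ∈ Ioc (a (c 0) k) (a (c 0) (k + 1))) :
    (∀ i : Fin n, a i k ≤ w m ∧ w m ≤ a i (k + 1)) ∧
      (∀ i j : Fin n, |w m - y (c 0) k| ≤ a i (k + 1) - a j k) := by
  -- main claim: for 1 ≤ t ≤ m, w t = y (c (t-1)) k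
  have key : ∀ t, 1 ≤ t → t ≤ m → w t = y (c (t - 1)) k := by
    intro t
    induction t with
    | zero => omega
    | succ p ih =>
      intro _ hpm
      obtain ⟨k', hk', hmem, heq⟩ := hchain p (Nat.lt_of_succ_le hpm)
      rcases Nat.eq_zero_or_pos p with hp | hp
      · subst hp
        rw [hw0] at hmem
        have := quant_unique (a (c 0)) M (hmono (c 0)) x k' k hk' hk hmem hfirst
        simpa [heq, this]
      · have hwp : w p = y (c (p - 1)) k := ih hp (le_trans (Nat.le_succ p) hpm)
        have hmem' : w p ∈ Set.Ioc (a (c p) k) (a (c p) (k + 1)) := by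
          rw [hwp]
          exact Set.Ioo_subset_Ioc_self (hshared (c p) (c (p - 1)) k hk)
        have := quant_unique (a (c p)) M (hmono (c p)) (w p) k' k hk' hk hmem hmem'
        simpa [heq, this]
  have hwm : w m = y (c (m - 1)) k := key m hm le_rfl
  constructor
  · intro i
    have := hshared i (c (m - 1)) k hk
    rw [hwm]
    exact ⟨le_of_lt this.1, le_of_lt this.2⟩
  · intro i j
    have h1 := hshared i (c (m - 1)) k hk
    have h2 := hshared j (c (m - 1)) k hk
    have h3 := hshared i (c 0) k hk
    have h4 := hshared j (c 0) k hk
    rw [hwm, abs_sub_le_iff]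
    constructor <;> linarith [h1.1, h1.2, h2.1, h2.2, h3.1, h3.2, h4.1, h4.2]
end

section
/- Let X have a log-concave density on (0,1). Then for any M, the mean squared error E[(X - q(X))^2] over M-level regular quantizers has a unique local minimum (which is thus the global minimum), i.e., the stationary points satisfying simultaneously the centroid condition and the nearest-neighbor (midpoint) condition are unique. -/
/-!
Existence: the Lloyd map, which moves each interior boundary to the midpoint of the centroids of
its two neighbouring cells, is monotone on sequences of boundaries in `[0, 1]`, so it has a fixed
point by Knaster–Tarski; positivity of the density forces the fixed point to be strictly
increasing, hence a stationary quantizer.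

Uniqueness: log-concavity of `f` makes `f (x + m) / f x` nonincreasing in `x`, and a
Chebyshev-type double-integral argument turns this into: translating a cell by `m ≥ 0` moves its
centroid by at most `m`. For two stationary quantizers with boundaries `a`, `b` and `a 1 ≤ b 1`,
the midpoint condition then propagates along the cells that the gap `b k - a k` is nonnegative
and nondecreasing; since it vanishes at `k = M`, it vanishes everywhere.
-/

open MeasureTheory Set

theorem mul_le_mul_shift_of_concaveOn_log {s : Set ℝ} {f : ℝ → ℝ}
    (hlc : ConcaveOn ℝ s fun x => Real.log (f x)) (hpos : ∀ x ∈ s, 0 < f x)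
    (hzero : ∀ x ∉ s, f x = 0) {m x y : ℝ} (hm : 0 ≤ m) (hyx : y ≤ x) :
    f (x + m) * f y ≤ f x * f (y + m) := by
  have hnonneg : ∀ z, 0 ≤ f z := fun z => by
    by_cases hz : z ∈ s
    · exact (hpos z hz).le
    · rw [hzero z hz]
  by_cases hys : y ∈ s
  swap
  · rw [hzero y hys, mul_zero]; exact mul_nonneg (hnonneg x) (hnonneg _)
  by_cases hxs : x + m ∈ s
  swap
  · rw [hzero _ hxs, zero_mul]; exact mul_nonneg (hnonneg x) (hnonneg _)
  rcases (show y ≤ x + m by linarith).eq_or_lt with hxy | hxy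
  · obtain rfl : m = 0 := by linarith
    rw [add_zero, add_zero, mul_comm]
  -- `t` makes `x` and `y + m` the convex combinations `t • y + (1 - t) • (x + m)` and vice versa
  set t := m / (x + m - y)
  have ht0 : 0 ≤ t := div_nonneg hm (by linarith)
  have ht1 : t ≤ 1 := (div_le_one (by linarith)).2 (by linarith)
  have htm : t * (x + m - y) = m := div_mul_cancel₀ m (by linarith)
  have hx : t * y + (1 - t) * (x + m) = x := by linear_combination -htm
  have hym : (1 - t) * y + t * (x + m) = y + m := by linear_combination htm
  have hmem : ∀ u v : ℝ, 0 ≤ u → 0 ≤ v → u + v = 1 → u * y + v * (x + m) ∈ s :=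
    fun u v hu hv huv => hlc.1 hys hxs hu hv huv
  have hcx := hlc.2 hys hxs ht0 (sub_nonneg.2 ht1) (by ring)
  have hcy := hlc.2 hys hxs (sub_nonneg.2 ht1) ht0 (by ring)
  simp only [smul_eq_mul] at hcx hcy
  rw [hx] at hcx
  rw [hym] at hcy
  have hfx : 0 < f x := hpos x (hx ▸ hmem _ _ ht0 (sub_nonneg.2 ht1) (by ring))
  have hfym : 0 < f (y + m) := hpos _ (hym ▸ hmem _ _ (sub_nonneg.2 ht1) ht0 (by ring))
  rw [← Real.log_le_log_iff (mul_pos (hpos _ hxs) (hpos y hys)) (mul_pos hfx hfym),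
    Real.log_mul (hpos _ hxs).ne' (hpos y hys).ne', Real.log_mul hfx.ne' hfym.ne']
  linarith

theorem integral_id_mul_mul_integral_le {μ : Measure ℝ} [SFinite μ] {f g : ℝ → ℝ}
    (hf : Integrable f μ) (hg : Integrable g μ) (hxf : Integrable (fun x => x * f x) μ)
    (hxg : Integrable (fun x => x * g x) μ) (hfg : ∀ x y, y ≤ x → g x * f y ≤ f x * g y) :
    (∫ x, x * g x ∂μ) * ∫ x, f x ∂μ ≤ (∫ x, x * f x ∂μ) * ∫ x, g x ∂μ := by
  have hpt : ∀ z : ℝ × ℝ, (z.1 - z.2) * (g z.1 * f z.2 - f z.1 * g z.2) ≤ 0 := by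
    rintro ⟨x, y⟩
    rcases le_total y x with h | h
    · exact mul_nonpos_of_nonneg_of_nonpos (sub_nonneg.2 h) (sub_nonpos.2 (hfg x y h))
    · exact mul_nonpos_of_nonpos_of_nonneg (sub_nonpos.2 h) (by linarith [hfg y x h])
  have I₁ := hxg.mul_prod (ν := μ) hf
  have I₂ := hxf.mul_prod (ν := μ) hg
  have I₃ := hg.mul_prod (ν := μ) hxf
  have I₄ := hf.mul_prod (ν := μ) hxg
  have hexpand : ∫ z, (z.1 - z.2) * (g z.1 * f z.2 - f z.1 * g z.2) ∂μ.prod μ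
      = 2 * ((∫ x, x * g x ∂μ) * ∫ x, f x ∂μ - (∫ x, x * f x ∂μ) * ∫ x, g x ∂μ) := by
    have hsplit : (fun z : ℝ × ℝ => (z.1 - z.2) * (g z.1 * f z.2 - f z.1 * g z.2)) =
        fun z => z.1 * g z.1 * f z.2 - z.1 * f z.1 * g z.2 - g z.1 * (z.2 * f z.2)
          + f z.1 * (z.2 * g z.2) := by
      ext z; ring
    have e₁ := integral_add ((I₁.sub I₂).sub I₃) I₄
    have e₂ := integral_sub (I₁.sub I₂) I₃
    have e₃ := integral_sub I₁ I₂
    simp only [Pi.sub_apply] at e₁ e₂ e₃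
    rw [hsplit, e₁, e₂, e₃, integral_prod_mul (fun x => x * g x) f,
      integral_prod_mul (fun x => x * f x) g, integral_prod_mul g (fun x => x * f x),
      integral_prod_mul f (fun x => x * g x)]
    ring
  have := integral_nonpos (μ := μ.prod μ) hpt
  linarith

theorem div_lt_add_div_add {m₁ m₂ s₁ s₂ : ℝ} (hs₁ : 0 < s₁) (hs₂ : 0 < s₂)
    (h : m₁ / s₁ < m₂ / s₂) : m₁ / s₁ < (m₁ + m₂) / (s₁ + s₂) := by
  rw [div_lt_div_iff₀ hs₁ hs₂] at h
  rw [div_lt_div_iff₀ hs₁ (add_pos hs₁ hs₂)]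
  linarith

theorem add_div_add_lt_div {m₁ m₂ s₁ s₂ : ℝ} (hs₁ : 0 < s₁) (hs₂ : 0 < s₂)
    (h : m₁ / s₁ < m₂ / s₂) : (m₁ + m₂) / (s₁ + s₂) < m₂ / s₂ := by
  rw [div_lt_div_iff₀ hs₁ hs₂] at h
  rw [div_lt_div_iff₀ (add_pos hs₁ hs₂) hs₂]
  linarith

theorem setIntegral_Ioc_pos {g : ℝ → ℝ} {a b c : ℝ} (hac : a < c) (hcb : c ≤ b)
    (hg : IntegrableOn g (Ioc a b)) (hnonneg : ∀ x ∈ Ioc a b, 0 ≤ g x)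
    (hpos : ∀ x ∈ Ioo a c, 0 < g x) : 0 < ∫ x in Ioc a b, g x := by
  have hsub : Ioc a c ⊆ Ioc a b := Ioc_subset_Ioc_right hcb
  calc 0 < ∫ x in a..c, g x :=
        intervalIntegral.intervalIntegral_pos_of_pos_on
          ((intervalIntegrable_iff_integrableOn_Ioc_of_le hac.le).2 (hg.mono_set hsub)) hpos hac
    _ = ∫ x in Ioc a c, g x := intervalIntegral.integral_of_le hac.le
    _ ≤ ∫ x in Ioc a b, g x :=
        setIntegral_mono_set hg ((ae_restrict_iff' measurableSet_Ioc).2 (ae_of_all _ hnonneg))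
          hsub.eventuallyLE

noncomputable def cellMass (f : ℝ → ℝ) (a b : ℝ) : ℝ := ∫ x in Ioc a b, f x

noncomputable def cellMoment (f : ℝ → ℝ) (a b : ℝ) : ℝ := ∫ x in Ioc a b, x * f x

noncomputable def centroid (f : ℝ → ℝ) (a b : ℝ) : ℝ := cellMoment f a b / cellMass f a b

theorem cellMass_add_right (f : ℝ → ℝ) {a b : ℝ} (hab : a ≤ b) (m : ℝ) :
    cellMass f (a + m) (b + m) = ∫ x in Ioc a b, f (x + m) := by
  rw [cellMass, ← intervalIntegral.integral_of_le (by linarith),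
    ← intervalIntegral.integral_comp_add_right, intervalIntegral.integral_of_le hab]

theorem cellMoment_add_right (f : ℝ → ℝ) {a b : ℝ} (hab : a ≤ b) (m : ℝ) :
    cellMoment f (a + m) (b + m) = ∫ x in Ioc a b, (x + m) * f (x + m) := by
  rw [cellMoment, ← intervalIntegral.integral_of_le (by linarith),
    ← intervalIntegral.integral_comp_add_right (fun x => x * f x),
    intervalIntegral.integral_of_le hab]

structure IsUnitIntervalWeight (f : ℝ → ℝ) : Prop where
  pos : ∀ x ∈ Ioo (0 : ℝ) 1, 0 < f x
  eq_zero : ∀ x ∉ Ioo (0 : ℝ) 1, f x = 0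
  integrable : Integrable f

namespace IsUnitIntervalWeight

variable {f : ℝ → ℝ} (hf : IsUnitIntervalWeight f)
include hf

theorem nonneg (x : ℝ) : 0 ≤ f x := by
  by_cases hx : x ∈ Ioo (0 : ℝ) 1
  · exact (hf.pos x hx).le
  · rw [hf.eq_zero x hx]

theorem integrable_id_mul : Integrable fun x => x * f x := by
  refine hf.integrable.mono (continuous_id.aestronglyMeasurable.mul hf.integrable.1)
    (ae_of_all _ fun x => ?_)
  by_cases hx : x ∈ Ioo (0 : ℝ) 1
  · rw [norm_mul]
    refine mul_le_of_le_one_left (norm_nonneg _) ?_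
    rw [Real.norm_eq_abs, abs_le]
    constructor <;> linarith [hx.1, hx.2]
  · simp [hf.eq_zero x hx]

theorem cellMass_add {a b c : ℝ} (hab : a ≤ b) (hbc : b ≤ c) :
    cellMass f a b + cellMass f b c = cellMass f a c := by
  simp only [cellMass, ← intervalIntegral.integral_of_le hab,
    ← intervalIntegral.integral_of_le hbc, ← intervalIntegral.integral_of_le (hab.trans hbc)]
  exact intervalIntegral.integral_add_adjacent_intervals hf.integrable.intervalIntegrable
    hf.integrable.intervalIntegrable

theorem cellMoment_add {a b c : ℝ} (hab : a ≤ b) (hbc : b ≤ c) :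
    cellMoment f a b + cellMoment f b c = cellMoment f a c := by
  simp only [cellMoment, ← intervalIntegral.integral_of_le hab,
    ← intervalIntegral.integral_of_le hbc, ← intervalIntegral.integral_of_le (hab.trans hbc)]
  exact intervalIntegral.integral_add_adjacent_intervals hf.integrable_id_mul.intervalIntegrable
    hf.integrable_id_mul.intervalIntegrable

theorem cellMoment_sub_mul_cellMass (a b c : ℝ) :
    cellMoment f a b - c * cellMass f a b = ∫ x in Ioc a b, (x - c) * f x := by
  rw [cellMoment, cellMass, ← integral_const_mul, ← integral_sub
    hf.integrable_id_mul.integrableOn (hf.integrable.integrableOn.const_mul c)]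
  simp only [sub_mul]

theorem mul_cellMass_sub_cellMoment (a b c : ℝ) :
    c * cellMass f a b - cellMoment f a b = ∫ x in Ioc a b, (c - x) * f x := by
  rw [← neg_sub, hf.cellMoment_sub_mul_cellMass, ← integral_neg]
  simp only [← neg_mul, neg_sub]

theorem setIntegral_mul_pos {w : ℝ → ℝ} (hw : Continuous w) {a b : ℝ} (ha : 0 ≤ a)
    (hab : a < b) (ha1 : a < 1) (hnonneg : ∀ x ∈ Ioc a b, 0 ≤ w x)
    (hpos : ∀ x ∈ Ioo a b, 0 < w x) : 0 < ∫ x in Ioc a b, w x * f x :=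
  setIntegral_Ioc_pos (lt_min hab ha1) (min_le_left b 1)
    ((hf.integrable.integrableOn.continuousOn_mul hw.continuousOn isCompact_Icc).mono_set
      Ioc_subset_Icc_self)
    (fun x hx => mul_nonneg (hnonneg x hx) (hf.nonneg x))
    (fun x hx => mul_pos (hpos x ⟨hx.1, hx.2.trans_le (min_le_left b 1)⟩)
      (hf.pos x ⟨ha.trans_lt hx.1, hx.2.trans_le (min_le_right b 1)⟩))

theorem cellMass_pos {a b : ℝ} (ha : 0 ≤ a) (hab : a < b) (ha1 : a < 1) :
    0 < cellMass f a b := by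
  simpa only [cellMass, one_mul] using
    hf.setIntegral_mul_pos continuous_const ha hab ha1 (fun _ _ => zero_le_one) fun _ _ => one_pos

theorem mul_cellMass_lt_cellMoment {a b : ℝ} (ha : 0 ≤ a) (hab : a < b) (ha1 : a < 1) :
    a * cellMass f a b < cellMoment f a b := by
  rw [← sub_pos, hf.cellMoment_sub_mul_cellMass]
  exact hf.setIntegral_mul_pos (continuous_id.sub continuous_const) ha hab ha1
    (fun x hx => sub_nonneg.2 hx.1.le) fun x hx => sub_pos.2 hx.1

theorem cellMoment_lt_mul_cellMass {a b : ℝ} (ha : 0 ≤ a) (hab : a < b) (ha1 : a < 1) :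
    cellMoment f a b < b * cellMass f a b := by
  rw [← sub_pos, hf.mul_cellMass_sub_cellMoment]
  exact hf.setIntegral_mul_pos (continuous_const.sub continuous_id) ha hab ha1
    (fun x hx => sub_nonneg.2 hx.2) fun x hx => sub_pos.2 hx.2

theorem centroid_mem_Ioo {a b : ℝ} (ha : 0 ≤ a) (hab : a < b) (ha1 : a < 1) :
    centroid f a b ∈ Ioo a b :=
  ⟨(lt_div_iff₀ (hf.cellMass_pos ha hab ha1)).2 (hf.mul_cellMass_lt_cellMoment ha hab ha1),
    (div_lt_iff₀ (hf.cellMass_pos ha hab ha1)).2 (hf.cellMoment_lt_mul_cellMass ha hab ha1)⟩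

theorem centroid_lt_centroid_right {a b b' : ℝ} (ha : 0 ≤ a) (hab : a < b) (hbb' : b < b')
    (hb1 : b < 1) : centroid f a b < centroid f a b' := by
  rw [centroid, centroid, ← hf.cellMoment_add hab.le hbb'.le, ← hf.cellMass_add hab.le hbb'.le]
  exact div_lt_add_div_add (hf.cellMass_pos ha hab (hab.trans hb1))
    (hf.cellMass_pos (ha.trans hab.le) hbb' hb1)
    ((hf.centroid_mem_Ioo ha hab (hab.trans hb1)).2.trans
      (hf.centroid_mem_Ioo (ha.trans hab.le) hbb' hb1).1)

theorem centroid_lt_centroid_left {a a' b : ℝ} (ha : 0 ≤ a) (haa' : a < a') (ha'b : a' < b)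
    (hb1 : b ≤ 1) : centroid f a b < centroid f a' b := by
  have ha'1 : a' < 1 := ha'b.trans_le hb1
  rw [centroid, centroid, ← hf.cellMoment_add haa'.le ha'b.le, ← hf.cellMass_add haa'.le ha'b.le]
  exact add_div_add_lt_div (hf.cellMass_pos ha haa' (haa'.trans ha'1))
    (hf.cellMass_pos (ha.trans haa'.le) ha'b ha'1)
    ((hf.centroid_mem_Ioo ha haa' (haa'.trans ha'1)).2.trans
      (hf.centroid_mem_Ioo (ha.trans haa'.le) ha'b ha'1).1)

theorem centroid_le_centroid {a a' b b' : ℝ} (ha : 0 ≤ a) (haa' : a ≤ a') (ha'b : a' < b)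
    (hbb' : b ≤ b') (hb' : b' ≤ 1) : centroid f a b ≤ centroid f a' b' := by
  calc centroid f a b ≤ centroid f a' b := by
        rcases haa'.eq_or_lt with rfl | haa'
        · rfl
        · exact (hf.centroid_lt_centroid_left ha haa' ha'b (hbb'.trans hb')).le
    _ ≤ centroid f a' b' := by
        rcases hbb'.eq_or_lt with rfl | hbb'
        · rfl
        · exact (hf.centroid_lt_centroid_right (ha.trans haa') ha'b hbb' (hbb'.trans_le hb')).le

variable (hlc : ConcaveOn ℝ (Ioo (0 : ℝ) 1) fun x => Real.log (f x))
include hlc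

theorem centroid_add_le {a b m : ℝ} (ha : 0 ≤ a) (hab : a < b) (hm : 0 ≤ m) (hbm : b + m ≤ 1) :
    centroid f (a + m) (b + m) ≤ centroid f a b + m := by
  have hg : IntegrableOn (fun x => f (x + m)) (Ioc a b) :=
    (hf.integrable.comp_add_right m).integrableOn
  have hxg : IntegrableOn (fun x => x * f (x + m)) (Ioc a b) := by
    refine ((hf.integrable_id_mul.comp_add_right m).sub
      ((hf.integrable.comp_add_right m).const_mul m)).integrableOn.congr (ae_of_all _ fun x => ?_)
    simp only [Pi.sub_apply]; ring
  have hcheb := integral_id_mul_mul_integral_le hf.integrable.integrableOn hg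
    hf.integrable_id_mul.integrableOn hxg
    fun x y hyx => mul_le_mul_shift_of_concaveOn_log hlc hf.pos hf.eq_zero hm hyx
  have hmass : cellMass f (a + m) (b + m) = ∫ x in Ioc a b, f (x + m) :=
    cellMass_add_right f hab.le m
  have hmoment : cellMoment f (a + m) (b + m)
      = (∫ x in Ioc a b, x * f (x + m)) + m * ∫ x in Ioc a b, f (x + m) := by
    rw [cellMoment_add_right f hab.le m, ← integral_const_mul, ← integral_add hxg (hg.const_mul m)]
    simp only [add_mul]
  have hpos : 0 < cellMass f (a + m) (b + m) :=
    hf.cellMass_pos (by linarith) (by linarith) (by linarith)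
  rw [centroid, centroid, hmoment, ← hmass, add_div, mul_div_assoc, div_self hpos.ne', mul_one,
    add_le_add_iff_right, div_le_div_iff₀ hpos (hf.cellMass_pos ha hab (by linarith)), hmass]
  exact hcheb

theorem centroid_sub_centroid_le {a a' b b' : ℝ} (ha : 0 ≤ a) (haa' : a < a') (hb : 0 ≤ b)
    (hb' : b' ≤ 1) (hgap : b - a ≤ b' - a') (hgap' : 0 ≤ b' - a') :
    centroid f b b' - centroid f a a' ≤ b' - a' := by
  rw [sub_le_iff_le_add']
  calc centroid f b b' ≤ centroid f (a + (b' - a')) (a' + (b' - a')) := by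
        rw [show a' + (b' - a') = b' by ring]
        exact hf.centroid_le_centroid hb (by linarith) (by linarith) le_rfl hb'
    _ ≤ centroid f a a' + (b' - a') :=
        hf.centroid_add_le hlc ha haa' hgap' (by linarith)

theorem sub_le_sub_of_le_centroid_sub {a a' b b' : ℝ} (ha : 0 ≤ a) (ha' : a' ≤ 1)
    (hbb' : b < b') (hb' : b' ≤ 1) (hgap : 0 ≤ b - a)
    (hle : b - a ≤ centroid f b b' - centroid f a a') : b - a ≤ b' - a' := by
  by_contra! hlt
  refine hle.not_gt (sub_lt_iff_lt_add'.2 ?_)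
  calc centroid f b b' = centroid f (a + (b - a)) (b' - (b - a) + (b - a)) := by ring_nf
    _ ≤ centroid f a (b' - (b - a)) + (b - a) :=
        hf.centroid_add_le hlc ha (by linarith) hgap (by linarith)
    _ < centroid f a a' + (b - a) := by
        gcongr
        exact hf.centroid_lt_centroid_right ha (by linarith) (by linarith) (by linarith)

end IsUnitIntervalWeight

structure IsStationarySeq (f : ℝ → ℝ) (M : ℕ) (a y : ℕ → ℝ) : Prop where
  zero : a 0 = 0
  last : a M = 1
  lt_succ : ∀ k < M, a k < a (k + 1)
  centroid_eq : ∀ k < M, y k = centroid f (a k) (a (k + 1))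
  midpoint : ∀ k, k + 1 < M → a (k + 1) = (y k + y (k + 1)) / 2

namespace IsStationarySeq

variable {f : ℝ → ℝ} {M : ℕ} {a y : ℕ → ℝ} (hs : IsStationarySeq f M a y)
include hs

theorem strictMonoOn : StrictMonoOn a (Iic M) :=
  strictMonoOn_of_lt_add_one ordConnected_Iic fun k _ _ hk => hs.lt_succ k hk

theorem mem_Icc {k : ℕ} (hk : k ≤ M) : a k ∈ Icc (0 : ℝ) 1 := by
  rw [← hs.zero, ← hs.last]
  exact ⟨hs.strictMonoOn.monotoneOn (Nat.zero_le M) hk (Nat.zero_le k),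
    hs.strictMonoOn.monotoneOn hk self_mem_Iic hk⟩

theorem lt_one {k : ℕ} (hk : k < M) : a k < 1 :=
  hs.last ▸ hs.strictMonoOn hk.le self_mem_Iic hk

theorem eq_of_le {b z : ℕ → ℝ} (hf : IsUnitIntervalWeight f)
    (hlc : ConcaveOn ℝ (Ioo (0 : ℝ) 1) fun x => Real.log (f x))
    (ht : IsStationarySeq f M b z) (h1 : a 1 ≤ b 1) {k : ℕ} (hk : k ≤ M) : a k = b k := by
  have hcell : ∀ k < M, 0 ≤ b k - a k → b k - a k ≤ z k - y k →
      b k - a k ≤ b (k + 1) - a (k + 1) ∧ z k - y k ≤ b (k + 1) - a (k + 1) := by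
    intro k hk hgap hle
    rw [hs.centroid_eq k hk, ht.centroid_eq k hk] at hle ⊢
    have hgrow := hf.sub_le_sub_of_le_centroid_sub hlc (hs.mem_Icc hk.le).1 (hs.mem_Icc hk).2
      (ht.lt_succ k hk) (ht.mem_Icc hk).2 hgap hle
    exact ⟨hgrow, hf.centroid_sub_centroid_le hlc (hs.mem_Icc hk.le).1 (hs.lt_succ k hk)
      (ht.mem_Icc hk.le).1 (ht.mem_Icc hk).2 hgrow (hgap.trans hgrow)⟩
  have hinv : ∀ k < M, 0 ≤ b k - a k ∧ b k - a k ≤ z k - y k := by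
    intro k
    induction k with
    | zero =>
      intro hM
      rw [hs.zero, ht.zero, sub_self, hs.centroid_eq 0 hM, ht.centroid_eq 0 hM, hs.zero, ht.zero,
        sub_nonneg]
      exact ⟨le_rfl, hf.centroid_le_centroid le_rfl le_rfl (hs.zero ▸ hs.lt_succ 0 hM) h1
        (ht.mem_Icc hM).2⟩
    | succ k ih =>
      intro hk
      obtain ⟨hgap, hle⟩ := ih (by omega)
      obtain ⟨hgrow, hle'⟩ := hcell k (by omega) hgap hle
      have hma := hs.midpoint k hk
      have hmb := ht.midpoint k hk
      constructor <;> linarith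
  have hmono : MonotoneOn (fun k => b k - a k) (Iic M) :=
    monotoneOn_of_le_add_one ordConnected_Iic fun k _ _ hk =>
      (hcell k hk (hinv k hk).1 (hinv k hk).2).1
  have hlast : b M - a M = 0 := by rw [hs.last, ht.last, sub_self]
  rcases hk.lt_or_eq with hk | rfl
  · linarith [(hinv k hk).1, hmono hk.le self_mem_Iic hk.le]
  · linarith

end IsStationarySeq

/-- The centroid, extended to degenerate cells `b ≤ a` by the midpoint so that the Lloyd map
below is monotone on the whole cube `[0, 1]^ℕ`. -/
noncomputable def extCentroid (f : ℝ → ℝ) (a b : ℝ) : ℝ :=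
  if a < b then centroid f a b else (a + b) / 2

theorem extCentroid_of_lt (f : ℝ → ℝ) {a b : ℝ} (h : a < b) : extCentroid f a b = centroid f a b :=
  if_pos h

theorem extCentroid_of_le (f : ℝ → ℝ) {a b : ℝ} (h : b ≤ a) : extCentroid f a b = (a + b) / 2 :=
  if_neg h.not_gt

noncomputable def lloydStep (f : ℝ → ℝ) (M : ℕ) (v : ℕ → ℝ) (k : ℕ) : ℝ :=
  if k = 0 then 0
  else if M ≤ k then 1
  else (extCentroid f (v (k - 1)) (v k) + extCentroid f (v k) (v (k + 1))) / 2

theorem lloydStep_zero (f : ℝ → ℝ) (M : ℕ) (v : ℕ → ℝ) : lloydStep f M v 0 = 0 := rfl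

theorem lloydStep_of_le (f : ℝ → ℝ) {M : ℕ} (v : ℕ → ℝ) {k : ℕ} (hk : k ≠ 0) (hMk : M ≤ k) :
    lloydStep f M v k = 1 := by
  simp [lloydStep, hk, hMk]

theorem two_mul_lloydStep (f : ℝ → ℝ) {M : ℕ} {v : ℕ → ℝ} {k : ℕ} (hk : 0 < k) (hkM : k < M) :
    2 * lloydStep f M v k = extCentroid f (v (k - 1)) (v k) + extCentroid f (v k) (v (k + 1)) := by
  simp only [lloydStep, if_neg hk.ne', if_neg hkM.not_ge]
  ring

namespace IsUnitIntervalWeight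

variable {f : ℝ → ℝ} (hf : IsUnitIntervalWeight f)
include hf

theorem extCentroid_mem_Ioo {a b : ℝ} (ha : 0 ≤ a) (hab : a < b) (hb : b ≤ 1) :
    extCentroid f a b ∈ Ioo a b :=
  extCentroid_of_lt f hab ▸ hf.centroid_mem_Ioo ha hab (hab.trans_le hb)

theorem extCentroid_mem_Icc {a b : ℝ} (ha : a ∈ Icc (0 : ℝ) 1) (hb : b ∈ Icc (0 : ℝ) 1) :
    extCentroid f a b ∈ Icc (0 : ℝ) 1 := by
  rcases lt_or_ge a b with hab | hba
  · have h := hf.extCentroid_mem_Ioo ha.1 hab hb.2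
    exact ⟨ha.1.trans h.1.le, h.2.le.trans hb.2⟩
  · rw [extCentroid_of_le f hba]
    constructor <;> linarith [ha.1, ha.2, hb.1, hb.2]

theorem extCentroid_mono {a a' b b' : ℝ} (ha : a ∈ Icc (0 : ℝ) 1) (ha' : a' ∈ Icc (0 : ℝ) 1)
    (hb : b ∈ Icc (0 : ℝ) 1) (hb' : b' ∈ Icc (0 : ℝ) 1) (haa' : a ≤ a') (hbb' : b ≤ b') :
    extCentroid f a b ≤ extCentroid f a' b' := by
  rcases lt_or_ge a b with hab | hba <;> rcases lt_or_ge a' b' with hab' | hba'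
  · rcases lt_or_ge a' b with ha'b | hba'
    · rw [extCentroid_of_lt f hab, extCentroid_of_lt f hab']
      exact hf.centroid_le_centroid ha.1 haa' ha'b hbb' hb'.2
    · linarith [(hf.extCentroid_mem_Ioo ha.1 hab hb.2).2,
        (hf.extCentroid_mem_Ioo ha'.1 hab' hb'.2).1]
  · rw [extCentroid_of_le f hba']
    linarith [(hf.extCentroid_mem_Ioo ha.1 hab hb.2).2]
  · rw [extCentroid_of_le f hba]
    linarith [(hf.extCentroid_mem_Ioo ha'.1 hab' hb'.2).1]
  · rw [extCentroid_of_le f hba, extCentroid_of_le f hba']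
    linarith

theorem lloydStep_mem_Icc {M : ℕ} {v : ℕ → ℝ} (hv : ∀ k, v k ∈ Icc (0 : ℝ) 1) (k : ℕ) :
    lloydStep f M v k ∈ Icc (0 : ℝ) 1 := by
  unfold lloydStep
  split_ifs
  · exact left_mem_Icc.2 zero_le_one
  · exact right_mem_Icc.2 zero_le_one
  · have h₁ := hf.extCentroid_mem_Icc (hv (k - 1)) (hv k)
    have h₂ := hf.extCentroid_mem_Icc (hv k) (hv (k + 1))
    constructor <;> linarith [h₁.1, h₁.2, h₂.1, h₂.2]

theorem lloydStep_mono {M : ℕ} {v w : ℕ → ℝ} (hv : ∀ k, v k ∈ Icc (0 : ℝ) 1)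
    (hw : ∀ k, w k ∈ Icc (0 : ℝ) 1) (hvw : v ≤ w) : lloydStep f M v ≤ lloydStep f M w := by
  intro k
  unfold lloydStep
  split_ifs
  · rfl
  · rfl
  · have h₁ := hf.extCentroid_mono (hv (k - 1)) (hw (k - 1)) (hv k) (hw k) (hvw _) (hvw _)
    have h₂ := hf.extCentroid_mono (hv k) (hw k) (hv (k + 1)) (hw (k + 1)) (hvw _) (hvw _)
    linarith

theorem exists_lloydStep_eq_self (M : ℕ) :
    ∃ a : ℕ → ℝ, (∀ k, a k ∈ Icc (0 : ℝ) 1) ∧ lloydStep f M a = a := by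
  let T : (ℕ → Icc (0 : ℝ) 1) →o (ℕ → Icc (0 : ℝ) 1) :=
    { toFun := fun v k => ⟨lloydStep f M (fun i => v i) k,
        hf.lloydStep_mem_Icc (fun i => (v i).2) k⟩
      monotone' := fun v w hvw k =>
        hf.lloydStep_mono (fun i => (v i).2) (fun i => (w i).2) (fun i => hvw i) k }
  exact ⟨fun k => T.lfp k, fun k => (T.lfp k).2,
    funext fun k => congrArg Subtype.val (congrFun T.map_lfp k)⟩

theorem zero_lt_apply_one_of_lloydStep_eq_self {M : ℕ} (hM : 0 < M) {a : ℕ → ℝ}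
    (ha : ∀ k, a k ∈ Icc (0 : ℝ) 1) (hfix : lloydStep f M a = a) : 0 < a 1 := by
  by_contra! h1
  have hzeros : ∀ j, j + 1 ≤ M → a j = 0 ∧ a (j + 1) = 0 := by
    intro j
    induction j with
    | zero => exact fun _ => ⟨hfix ▸ lloydStep_zero f M a, le_antisymm h1 (ha 1).1⟩
    | succ j ih =>
      intro hj
      obtain ⟨hj0, hj1⟩ := ih (by omega)
      refine ⟨hj1, ?_⟩
      by_contra hne
      have hnext := (hf.extCentroid_mem_Ioo le_rfl
        (lt_of_le_of_ne (ha (j + 1 + 1)).1 (Ne.symm hne)) (ha _).2).1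
      have hr := two_mul_lloydStep f (M := M) (v := a) (k := j + 1) (by omega) (by omega)
      rw [hfix, Nat.add_sub_cancel, hj0, hj1, extCentroid_of_le f le_rfl] at hr
      linarith
  have hM0 := (hzeros (M - 1) (by omega)).2
  rw [Nat.sub_add_cancel hM, ← hfix, lloydStep_of_le f a hM.ne' le_rfl] at hM0
  exact one_ne_zero hM0

theorem lt_succ_of_lloydStep_eq_self {M : ℕ} (hM : 0 < M) {a : ℕ → ℝ}
    (ha : ∀ k, a k ∈ Icc (0 : ℝ) 1) (hfix : lloydStep f M a = a) {k : ℕ} (hk : k < M) :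
    a k < a (k + 1) := by
  induction k with
  | zero =>
    rw [← hfix, lloydStep_zero, hfix]
    exact hf.zero_lt_apply_one_of_lloydStep_eq_self hM ha hfix
  | succ k ih =>
    by_contra! hle
    have hcell := (hf.extCentroid_mem_Ioo (ha k).1 (ih (by omega)) (ha (k + 1)).2).2
    have hr := two_mul_lloydStep f (v := a) (k := k + 1) k.succ_pos hk
    rw [hfix, Nat.add_sub_cancel, extCentroid_of_le f hle] at hr
    linarith

theorem isStationarySeq_of_lloydStep_eq_self {M : ℕ} (hM : 0 < M) {a : ℕ → ℝ}
    (ha : ∀ k, a k ∈ Icc (0 : ℝ) 1) (hfix : lloydStep f M a = a) :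
    IsStationarySeq f M a fun k => centroid f (a k) (a (k + 1)) := by
  have hlt : ∀ k < M, a k < a (k + 1) := fun k => hf.lt_succ_of_lloydStep_eq_self hM ha hfix
  refine ⟨hfix ▸ lloydStep_zero f M a, hfix ▸ lloydStep_of_le f a hM.ne' le_rfl, hlt,
    fun k _ => rfl, fun k hk => ?_⟩
  have hr := two_mul_lloydStep f (v := a) (k := k + 1) k.succ_pos hk
  rw [hfix, Nat.add_sub_cancel, extCentroid_of_lt f (hlt k (by omega)),
    extCentroid_of_lt f (hlt (k + 1) hk)] at hr
  linarith

end IsUnitIntervalWeight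

def IsStationaryQuantizer (f : ℝ → ℝ) (M : ℕ) (p : (Fin (M + 1) → ℝ) × (Fin M → ℝ)) : Prop :=
  p.1 0 = 0 ∧ p.1 (Fin.last M) = 1 ∧ StrictMono p.1 ∧
    (∀ k : Fin M, p.2 k ∈ Ioo (p.1 k.castSucc) (p.1 k.succ)) ∧
    (∀ k : Fin M, p.2 k = centroid f (p.1 k.castSucc) (p.1 k.succ)) ∧
    (∀ k : ℕ, ∀ h : k + 1 < M,
      p.1 ⟨k + 1, Nat.lt_succ_of_lt h⟩ = (p.2 ⟨k, Nat.lt_of_succ_lt h⟩ + p.2 ⟨k + 1, h⟩) / 2)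

theorem IsStationarySeq.isStationaryQuantizer {f : ℝ → ℝ} (hf : IsUnitIntervalWeight f) {M : ℕ}
    {a y : ℕ → ℝ} (hs : IsStationarySeq f M a y) :
    IsStationaryQuantizer f M (fun k => a k, fun k => y k) :=
  ⟨hs.zero, hs.last, Fin.strictMono_iff_lt_succ.2 fun k => hs.lt_succ k k.2,
    fun k => by
      show y k ∈ Ioo (a k) (a (k + 1))
      rw [hs.centroid_eq k k.2]
      exact hf.centroid_mem_Ioo (hs.mem_Icc k.2.le).1 (hs.lt_succ k k.2) (hs.lt_one k.2),
    fun k => hs.centroid_eq k k.2, fun k hk => hs.midpoint k hk⟩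

theorem IsStationaryQuantizer.isStationarySeq {f : ℝ → ℝ} {M : ℕ}
    {p : (Fin (M + 1) → ℝ) × (Fin M → ℝ)} (hp : IsStationaryQuantizer f M p) :
    IsStationarySeq f M (Function.extend Fin.val p.1 0) (Function.extend Fin.val p.2 0) := by
  obtain ⟨hzero, hlast, hmono, -, hcentroid, hmid⟩ := hp
  have ha : ∀ k : Fin (M + 1), Function.extend Fin.val p.1 0 k = p.1 k :=
    Fin.val_injective.extend_apply p.1 0
  have hy : ∀ k : Fin M, Function.extend Fin.val p.2 0 k = p.2 k :=
    Fin.val_injective.extend_apply p.2 0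
  refine ⟨(ha 0).trans hzero, (ha (Fin.last M)).trans hlast, fun k hk => ?_, fun k hk => ?_,
    fun k hk => ?_⟩
  · rw [ha ⟨k, by omega⟩, ha ⟨k + 1, by omega⟩]
    exact hmono (Fin.castSucc_lt_succ (i := ⟨k, hk⟩))
  · rw [hy ⟨k, hk⟩, ha ⟨k, by omega⟩, ha ⟨k + 1, by omega⟩]
    exact hcentroid ⟨k, hk⟩
  · rw [ha ⟨k + 1, by omega⟩, hy ⟨k, by omega⟩, hy ⟨k + 1, hk⟩]
    exact hmid k hk

theorem IsStationaryQuantizer.unique {f : ℝ → ℝ} (hf : IsUnitIntervalWeight f)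
    (hlc : ConcaveOn ℝ (Ioo (0 : ℝ) 1) fun x => Real.log (f x)) {M : ℕ}
    {p q : (Fin (M + 1) → ℝ) × (Fin M → ℝ)} (hp : IsStationaryQuantizer f M p)
    (hq : IsStationaryQuantizer f M q) : p = q := by
  have hbound : p.1 = q.1 := by
    funext k
    rw [← Fin.val_injective.extend_apply p.1 0, ← Fin.val_injective.extend_apply q.1 0]
    rcases le_total (Function.extend Fin.val p.1 0 1) (Function.extend Fin.val q.1 0 1) with h | h
    · exact hp.isStationarySeq.eq_of_le hf hlc hq.isStationarySeq h k.is_le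
    · exact (hq.isStationarySeq.eq_of_le hf hlc hp.isStationarySeq h k.is_le).symm
  obtain ⟨-, -, -, -, hpc, -⟩ := hp
  obtain ⟨-, -, -, -, hqc, -⟩ := hq
  exact Prod.ext hbound (funext fun k => by rw [hpc k, hqc k, hbound])

/-- For a source on (0,1) with a log-concave (positive) density, the `M`-level
regular quantizer stationary points — satisfying simultaneously the centroid condition and the
nearest-neighbor (midpoint) condition — are unique; i.e., the mean squared error has a unique
local (hence global) minimum (Trushkin's condition). -/
theorem logConcave_unique_stationary_quantizer
    (M : ℕ) (hM : 0 < M)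
    (f : ℝ → ℝ) (hfpos : ∀ x ∈ Ioo (0:ℝ) 1, 0 < f x)
    (hfzero : ∀ x, x ∉ Ioo (0:ℝ) 1 → f x = 0)
    (hfint : IntegrableOn f (Ioo (0:ℝ) 1))
    (hlc : ConcaveOn ℝ (Ioo (0:ℝ) 1) (fun x => Real.log (f x))) :
    ∃! p : (Fin (M + 1) → ℝ) × (Fin M → ℝ),
      p.1 0 = 0 ∧ p.1 (Fin.last M) = 1 ∧ StrictMono p.1 ∧
      (∀ k : Fin M, p.2 k ∈ Ioo (p.1 k.castSucc) (p.1 k.succ)) ∧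
      (∀ k : Fin M,
        p.2 k = (∫ x in Ioc (p.1 k.castSucc) (p.1 k.succ), x * f x)
          / ∫ x in Ioc (p.1 k.castSucc) (p.1 k.succ), f x) ∧
      (∀ k : ℕ, ∀ h : k + 1 < M,
        p.1 ⟨k + 1, by omega⟩ = (p.2 ⟨k, by omega⟩ + p.2 ⟨k + 1, h⟩) / 2) := by
  have hf : IsUnitIntervalWeight f :=
    ⟨hfpos, hfzero, (integrableOn_iff_integrable_of_support_subset fun x hx =>
      not_not.1 fun h => hx (hfzero x h)).1 hfint⟩
  obtain ⟨a, ha, hfix⟩ := hf.exists_lloydStep_eq_self M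
  have hp := (hf.isStationarySeq_of_lloydStep_eq_self hM ha hfix).isStationaryQuantizer hf
  exact ⟨_, hp, fun q hq => IsStationaryQuantizer.unique hf hlc hq hp⟩
end

section
/- The best-response distortion of an agent is continuous in the others' strategies: let D(q, θ) = E[(X_θ - q(X_θ))^2] where the density p_θ of X_θ on (0,1) depends continuously (in total variation) on a parameter θ, is positive and log-concave for each θ. Then θ ↦ min_q D(q, θ), the minimum over M-level regular quantizers, is continuous in θ. -/
/-!
For a fixed quantizer the distortion is linear in the density, and the squared error
`(x - y)²` is at most `1` on the unit interval, so the distortion is `1`-Lipschitz for the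
`L¹` distance of densities. An infimum of uniformly `1`-Lipschitz functions is again
`1`-Lipschitz, hence the minimal distortion moves by at most the total variation distance.
-/

open MeasureTheory Set Filter

theorem bddBelow_range_of_abs_sub_le {ι : Sort*} {f g : ι → ℝ} {ε : ℝ}
    (h : ∀ i, |f i - g i| ≤ ε) (hf : BddBelow (range f)) : BddBelow (range g) := by
  obtain ⟨b, hb⟩ := hf
  refine ⟨b - ε, forall_mem_range.2 fun i => ?_⟩
  linarith [hb (mem_range_self i), (abs_sub_le_iff.1 (h i)).1]

theorem Real.iInf_sub_iInf_le_of_abs_sub_le {ι : Sort*} {f g : ι → ℝ} {ε : ℝ} (hε : 0 ≤ ε)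
    (h : ∀ i, |f i - g i| ≤ ε) (hf : BddBelow (range f)) : (⨅ i, f i) - ⨅ i, g i ≤ ε := by
  rcases isEmpty_or_nonempty ι with hι | hι
  · simp [hε]
  · rw [sub_le_comm]
    exact le_ciInf fun i => by linarith [ciInf_le hf i, (abs_sub_le_iff.1 (h i)).1]

/-- No boundedness is needed: the two families are unbounded below together, and then both
infima are the junk value `0`. -/
theorem Real.abs_iInf_sub_iInf_le {ι : Sort*} {f g : ι → ℝ} {ε : ℝ} (hε : 0 ≤ ε)
    (h : ∀ i, |f i - g i| ≤ ε) : |(⨅ i, f i) - ⨅ i, g i| ≤ ε := by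
  have h' : ∀ i, |g i - f i| ≤ ε := fun i => abs_sub_comm (f i) (g i) ▸ h i
  by_cases hf : BddBelow (range f)
  · exact abs_sub_le_iff.2 ⟨Real.iInf_sub_iInf_le_of_abs_sub_le hε h hf,
      Real.iInf_sub_iInf_le_of_abs_sub_le hε h' (bddBelow_range_of_abs_sub_le h hf)⟩
  · have hg : ¬BddBelow (range g) := fun hg => hf (bddBelow_range_of_abs_sub_le h' hg)
    simp [Real.iInf_of_not_bddBelow hf, Real.iInf_of_not_bddBelow hg, hε]

structure RegularQuantizer (M : ℕ) where
  a : ℕ → ℝ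
  y : ℕ → ℝ
  a_zero : a 0 = 0
  a_last : a M = 1
  a_lt : ∀ k < M, a k < a (k + 1)
  y_mem : ∀ k < M, y k ∈ Ioo (a k) (a (k + 1))

namespace RegularQuantizer

variable {M : ℕ} (q : RegularQuantizer M)

noncomputable def distortion (f : ℝ → ℝ) : ℝ :=
  ∑ k ∈ Finset.range M, ∫ x in Ioc (q.a k) (q.a (k + 1)), (x - q.y k) ^ 2 * f x

theorem a_mem_Icc {k : ℕ} (hk : k ≤ M) : q.a k ∈ Icc 0 1 := by
  have hmono := (strictMonoOn_Iic_of_lt_succ (ψ := q.a) q.a_lt).monotoneOn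
  refine ⟨q.a_zero ▸ hmono (mem_Iic.2 (Nat.zero_le M)) hk (Nat.zero_le k), ?_⟩
  exact q.a_last ▸ hmono hk (mem_Iic.2 le_rfl) hk

theorem cell_subset {k : ℕ} (hk : k < M) : Ioc (q.a k) (q.a (k + 1)) ⊆ Ioc 0 1 :=
  Ioc_subset_Ioc (q.a_mem_Icc hk.le).1 (q.a_mem_Icc hk).2

theorem sq_sub_y_le_one {k : ℕ} (hk : k < M) {x : ℝ} (hx : x ∈ Ioc 0 1) :
    (x - q.y k) ^ 2 ≤ 1 := by
  have hy := q.y_mem k hk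
  have h0 := (q.a_mem_Icc hk.le).1
  have h1 := (q.a_mem_Icc hk).2
  nlinarith [hx.1, hx.2, hy.1, hy.2]

theorem integrableOn_cell {f : ℝ → ℝ} (hf : IntegrableOn f (Ioc 0 1)) {k : ℕ} (hk : k < M) :
    IntegrableOn (fun x => (x - q.y k) ^ 2 * f x) (Ioc (q.a k) (q.a (k + 1))) :=
  (hf.mono_set (q.cell_subset hk)).continuousOn_mul_of_subset (by fun_prop) isCompact_Icc
    measurableSet_Ioc Ioc_subset_Icc_self

theorem distortion_sub {f g : ℝ → ℝ} (hf : IntegrableOn f (Ioc 0 1))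
    (hg : IntegrableOn g (Ioc 0 1)) : q.distortion f - q.distortion g = q.distortion (f - g) := by
  rw [distortion, distortion, distortion, ← Finset.sum_sub_distrib]
  refine Finset.sum_congr rfl fun k hk => ?_
  have hk := Finset.mem_range.1 hk
  rw [← integral_sub (q.integrableOn_cell hf hk) (q.integrableOn_cell hg hk)]
  simp only [Pi.sub_apply, mul_sub]

theorem abs_distortion_le {f : ℝ → ℝ} (hf : IntegrableOn f (Ioc 0 1)) :
    |q.distortion f| ≤ ∫ x in Ioc 0 1, |f x| := by
  have hcell : ∀ k < M, |∫ x in Ioc (q.a k) (q.a (k + 1)), (x - q.y k) ^ 2 * f x|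
      ≤ ∫ x in q.a k..q.a (k + 1), |f x| := by
    intro k hk
    rw [intervalIntegral.integral_of_le (q.a_lt k hk).le, ← Real.norm_eq_abs]
    refine norm_integral_le_of_norm_le (hf.mono_set (q.cell_subset hk)).abs
      (ae_restrict_of_forall_mem measurableSet_Ioc fun x hx => ?_)
    rw [Real.norm_eq_abs, abs_mul, abs_sq]
    exact mul_le_of_le_one_left (abs_nonneg _) (q.sq_sub_y_le_one hk (q.cell_subset hk hx))
  have hadjacent : ∀ k < M, IntervalIntegrable (fun x => |f x|) volume (q.a k) (q.a (k + 1)) :=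
    fun k hk => (intervalIntegrable_iff_integrableOn_Ioc_of_le (q.a_lt k hk).le).2
      (hf.mono_set (q.cell_subset hk)).abs
  calc |q.distortion f|
      ≤ ∑ k ∈ Finset.range M, |∫ x in Ioc (q.a k) (q.a (k + 1)), (x - q.y k) ^ 2 * f x| :=
        Finset.abs_sum_le_sum_abs _ _
    _ ≤ ∑ k ∈ Finset.range M, ∫ x in q.a k..q.a (k + 1), |f x| :=
        Finset.sum_le_sum fun k hk => hcell k (Finset.mem_range.1 hk)
    _ = ∫ x in Ioc 0 1, |f x| := by
        rw [intervalIntegral.sum_integral_adjacent_intervals hadjacent, q.a_zero, q.a_last,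
          intervalIntegral.integral_of_le zero_le_one]

theorem dist_iInf_distortion_le {f g : ℝ → ℝ} (hf : IntegrableOn f (Ioo 0 1))
    (hg : IntegrableOn g (Ioo 0 1)) :
    dist (⨅ q : RegularQuantizer M, q.distortion f) (⨅ q : RegularQuantizer M, q.distortion g)
      ≤ ∫ x in Ioo 0 1, |f x - g x| := by
  rw [← integrableOn_Ioc_iff_integrableOn_Ioo] at hf hg
  rw [Real.dist_eq, ← integral_Ioc_eq_integral_Ioo]
  refine Real.abs_iInf_sub_iInf_le (setIntegral_nonneg measurableSet_Ioc fun _ _ => abs_nonneg _)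
    fun q => ?_
  rw [q.distortion_sub hf hg]
  exact q.abs_distortion_le (hf.sub hg)

theorem iInf_distortion_eq (f : ℝ → ℝ) :
    ⨅ q : RegularQuantizer M, q.distortion f =
      sInf {d : ℝ | ∃ a y : ℕ → ℝ,
        a 0 = 0 ∧ a M = 1 ∧ (∀ k < M, a k < a (k + 1)) ∧
        (∀ k < M, y k ∈ Ioo (a k) (a (k + 1))) ∧
        d = ∑ k ∈ Finset.range M, ∫ x in Ioc (a k) (a (k + 1)), (x - y k) ^ 2 * f x} := by
  refine congrArg sInf (Set.ext fun d => ?_)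
  constructor
  · rintro ⟨q, rfl⟩
    exact ⟨q.a, q.y, q.a_zero, q.a_last, q.a_lt, q.y_mem, rfl⟩
  · rintro ⟨a, y, h0, hM, hlt, hy, rfl⟩
    exact ⟨⟨a, y, h0, hM, hlt, hy⟩, rfl⟩

end RegularQuantizer

theorem min_distortion_continuous_general
    (Θ : Type*) [MetricSpace Θ] (M : ℕ)
    (p : Θ → ℝ → ℝ)
    (hint : ∀ θ, IntegrableOn (p θ) (Ioo (0:ℝ) 1))
    (htv : ∀ θ₀ : Θ,
      Tendsto (fun θ => ∫ x in Ioo (0:ℝ) 1, |p θ x - p θ₀ x|) (nhds θ₀) (nhds 0)) :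
    Continuous (fun θ : Θ =>
      sInf {d : ℝ | ∃ a y : ℕ → ℝ,
        a 0 = 0 ∧ a M = 1 ∧ (∀ k < M, a k < a (k + 1)) ∧
        (∀ k < M, y k ∈ Ioo (a k) (a (k + 1))) ∧
        d = ∑ k ∈ Finset.range M,
          ∫ x in Ioc (a k) (a (k + 1)), (x - y k) ^ 2 * p θ x}) := by
  simp_rw [← RegularQuantizer.iInf_distortion_eq]
  refine continuous_iff_continuousAt.2 fun θ₀ => tendsto_iff_dist_tendsto_zero.2 ?_
  exact squeeze_zero (fun _ => dist_nonneg)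
    (fun θ => RegularQuantizer.dist_iInf_distortion_le (hint θ) (hint θ₀)) (htv θ₀)

/-- The minimal distortion is continuous in the others' strategies: if the
source density `p θ` on (0,1) is positive, log-concave, a probability density, and depends
continuously on the parameter `θ` in total variation, then the minimum over `M`-level regular
quantizers of the expected squared distortion is a continuous function of `θ`. -/
theorem min_distortion_continuous
    (Θ : Type*) [MetricSpace Θ] (M : ℕ) (hM : 0 < M)
    (p : Θ → ℝ → ℝ)
    (hpos : ∀ θ, ∀ x ∈ Ioo (0:ℝ) 1, 0 < p θ x)
    (hlc : ∀ θ, ConcaveOn ℝ (Ioo (0:ℝ) 1) (fun x => Real.log (p θ x)))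
    (hint : ∀ θ, IntegrableOn (p θ) (Ioo (0:ℝ) 1))
    (hnorm : ∀ θ, ∫ x in Ioo (0:ℝ) 1, p θ x = 1)
    (htv : ∀ θ₀ : Θ,
      Tendsto (fun θ => ∫ x in Ioo (0:ℝ) 1, |p θ x - p θ₀ x|) (nhds θ₀) (nhds 0)) :
    Continuous (fun θ : Θ =>
      sInf {d : ℝ | ∃ a y : ℕ → ℝ,
        a 0 = 0 ∧ a M = 1 ∧ (∀ k < M, a k < a (k + 1)) ∧
        (∀ k < M, y k ∈ Ioo (a k) (a (k + 1))) ∧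
        d = ∑ k ∈ Finset.range M,
          ∫ x in Ioc (a k) (a (k + 1)), (x - y k) ^ 2 * p θ x}) :=
  min_distortion_continuous_general Θ M p hint htv
end

section
/- If the communication matrix P is row-stochastic with P_{ii} > 0 for all i, then the system of equations p_i^{(sp)} = P_{ii} p_i^{(p)} + Σ_{j≠i} P_{ij} p_j^{(sp)}, i = 1,...,N, has a unique solution in probability densities (p_1^{(sp)}, ..., p_N^{(sp)}) given physical densities (p_1^{(p)}, ..., p_N^{(p)}), and each p_i^{(sp)} is a convex combination of the physical densities p_1^{(p)}, ..., p_N^{(p)}. -/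
/-!
Put `A := I - Q`, where `Q` is `P` with its diagonal removed. The equations say
`A (ps · x) = (P i i * pp i x)ᵢ` for every `x`. If `A v ≥ 0`, look at a minimal entry `v k`:
its equation gives `P k k * v k ≥ (A v) k ≥ 0`, so `v ≥ 0`. Applied to `±v` this makes `A`
injective, hence invertible, which gives existence and uniqueness, and it makes `A⁻¹` entrywise
nonnegative. The weights `w j = A⁻¹ i j * P j j` are therefore nonnegative, and they sum to `1`
because `A 𝟙 = (P j j)ⱼ` by row-stochasticity.
-/

open Finset Matrix

namespace Matrix

variable {ι K : Type*} [Fintype ι] [DecidableEq ι]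

def oneSubOffDiag [Ring K] (P : Matrix ι ι K) : Matrix ι ι K :=
  of fun i j => if i = j then 1 else -P i j

section Ring

variable [CommRing K] (P : Matrix ι ι K)

theorem oneSubOffDiag_mulVec_apply (v : ι → K) (i : ι) :
    (oneSubOffDiag P *ᵥ v) i = v i - ∑ j ∈ univ.erase i, P i j * v j := by
  rw [mulVec, dotProduct, ← add_sum_erase univ _ (mem_univ i), sub_eq_add_neg,
    ← sum_neg_distrib]
  congr 1
  · simp [oneSubOffDiag]
  · refine sum_congr rfl fun j hj => ?_
    simp [oneSubOffDiag, (ne_of_mem_erase hj).symm]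

theorem oneSubOffDiag_mulVec_eq_iff (b v : ι → K) :
    oneSubOffDiag P *ᵥ v = (fun i => P i i * b i) ↔
      ∀ i, v i = P i i * b i + ∑ j ∈ univ.erase i, P i j * v j := by
  simp only [funext_iff, oneSubOffDiag_mulVec_apply, sub_eq_iff_eq_add]

theorem eq_inv_oneSubOffDiag_mulVec_iff (hdet : IsUnit (oneSubOffDiag P).det) (b v : ι → K) :
    v = (oneSubOffDiag P)⁻¹ *ᵥ (fun i => P i i * b i) ↔
      ∀ i, v i = P i i * b i + ∑ j ∈ univ.erase i, P i j * v j := by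
  rw [← oneSubOffDiag_mulVec_eq_iff]
  constructor
  · rintro rfl
    rw [mulVec_mulVec, mul_nonsing_inv _ hdet, one_mulVec]
  · intro h
    rw [← h, mulVec_mulVec, nonsing_inv_mul _ hdet, one_mulVec]

theorem oneSubOffDiag_mulVec_one (hrow : ∀ i, ∑ j, P i j = 1) :
    oneSubOffDiag P *ᵥ (fun _ => 1) = fun i => P i i := by
  ext i
  rw [oneSubOffDiag_mulVec_apply]
  simp only [mul_one, sum_erase_eq_sub (mem_univ i), hrow]
  ring

end Ring

section Ordered

variable [Field K] [LinearOrder K] [IsStrictOrderedRing K] {P : Matrix ι ι K}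

theorem nonneg_of_oneSubOffDiag_mulVec_nonneg
    (hnn : ∀ i j, 0 ≤ P i j) (hrow : ∀ i, ∑ j, P i j = 1) (hdiag : ∀ i, 0 < P i i)
    {v : ι → K} (hv : ∀ i, 0 ≤ (oneSubOffDiag P *ᵥ v) i) (i : ι) : 0 ≤ v i := by
  obtain ⟨k, -, hk⟩ := exists_min_image univ v ⟨i, mem_univ i⟩
  have hk_row := hv k
  rw [oneSubOffDiag_mulVec_apply] at hk_row
  have hmin : (1 - P k k) * v k ≤ ∑ j ∈ univ.erase k, P k j * v j := by
    rw [← hrow k, ← sum_erase_eq_sub (mem_univ k), sum_mul]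
    exact sum_le_sum fun j _ => mul_le_mul_of_nonneg_left (hk j (mem_univ j)) (hnn k j)
  have hvk : 0 ≤ v k := nonneg_of_mul_nonneg_right (by linarith) (hdiag k)
  exact hvk.trans (hk i (mem_univ i))

variable (hnn : ∀ i j, 0 ≤ P i j) (hrow : ∀ i, ∑ j, P i j = 1) (hdiag : ∀ i, 0 < P i i)
include hnn hrow hdiag

theorem isUnit_det_oneSubOffDiag : IsUnit (oneSubOffDiag P).det := by
  rw [← isUnit_iff_isUnit_det, ← mulVec_injective_iff_isUnit]
  refine (injective_iff_map_eq_zero (oneSubOffDiag P).mulVecLin).2 fun v hv => funext fun i => ?_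
  rw [mulVecLin_apply] at hv
  have hv_nonneg := nonneg_of_oneSubOffDiag_mulVec_nonneg hnn hrow hdiag (v := v) (by simp [hv])
  have hv_nonpos := nonneg_of_oneSubOffDiag_mulVec_nonneg hnn hrow hdiag (v := -v)
    (by simp [mulVec_neg, hv])
  exact le_antisymm (neg_nonneg.1 (hv_nonpos i)) (hv_nonneg i)

theorem inv_oneSubOffDiag_apply_nonneg (i j : ι) : 0 ≤ (oneSubOffDiag P)⁻¹ i j := by
  have hdet := isUnit_det_oneSubOffDiag hnn hrow hdiag
  have hcol : oneSubOffDiag P *ᵥ ((oneSubOffDiag P)⁻¹ *ᵥ Pi.single j 1) = Pi.single j 1 := by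
    rw [mulVec_mulVec, mul_nonsing_inv _ hdet, one_mulVec]
  have hsingle : (0 : ι → K) ≤ Pi.single j 1 := Pi.single_nonneg.2 zero_le_one
  have := nonneg_of_oneSubOffDiag_mulVec_nonneg hnn hrow hdiag (fun m => hcol ▸ hsingle m) i
  rwa [mulVec_single_one] at this

theorem sum_inv_oneSubOffDiag_mul_diag (i : ι) :
    ∑ j, (oneSubOffDiag P)⁻¹ i j * P j j = 1 := by
  have hdet := isUnit_det_oneSubOffDiag hnn hrow hdiag
  have hone : (oneSubOffDiag P)⁻¹ *ᵥ (fun j => P j j) = fun _ => 1 := by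
    rw [← oneSubOffDiag_mulVec_one P hrow, mulVec_mulVec, nonsing_inv_mul _ hdet, one_mulVec]
  exact congrFun hone i

end Ordered

end Matrix

open MeasureTheory

theorem social_density_unique_convex_combination_general
    (N : ℕ) (P : Matrix (Fin N) (Fin N) ℝ)
    (hnn : ∀ i j, 0 ≤ P i j) (hrow : ∀ i, ∑ j, P i j = 1) (hdiag : ∀ i, 0 < P i i)
    (pp : Fin N → ℝ → ℝ) :
    (∃! ps : Fin N → ℝ → ℝ, ∀ i x,
        ps i x = P i i * pp i x + ∑ j ∈ Finset.univ.erase i, P i j * ps j x) ∧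
      ∀ ps : Fin N → ℝ → ℝ,
        (∀ i x, ps i x = P i i * pp i x + ∑ j ∈ Finset.univ.erase i, P i j * ps j x) →
        ∀ i, ∃ w : Fin N → ℝ, (∀ j, 0 ≤ w j) ∧ (∑ j, w j = 1) ∧
          ∀ x, ps i x = ∑ j, w j * pp j x := by
  set A := oneSubOffDiag P
  have hdet : IsUnit A.det := isUnit_det_oneSubOffDiag hnn hrow hdiag
  set sol : Fin N → ℝ → ℝ := fun i x => (A⁻¹ *ᵥ fun j => P j j * pp j x) i
  have hsolves : ∀ ps : Fin N → ℝ → ℝ,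
      (∀ i x, ps i x = P i i * pp i x + ∑ j ∈ univ.erase i, P i j * ps j x) ↔ ps = sol := by
    intro ps
    rw [forall_comm]
    calc (∀ x i, ps i x = P i i * pp i x + ∑ j ∈ univ.erase i, P i j * ps j x)
        ↔ ∀ x, (fun j => ps j x) = A⁻¹ *ᵥ fun j => P j j * pp j x :=
          forall_congr' fun x => (eq_inv_oneSubOffDiag_mulVec_iff P hdet _ _).symm
      _ ↔ ps = sol := by simp only [funext_iff, sol]; exact forall_comm
  refine ⟨⟨sol, (hsolves sol).2 rfl, fun ps hps => (hsolves ps).1 hps⟩, ?_⟩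
  rintro ps hps i
  obtain rfl := (hsolves ps).1 hps
  refine ⟨fun j => A⁻¹ i j * P j j, fun j => ?_,
    sum_inv_oneSubOffDiag_mul_diag hnn hrow hdiag i, fun x => ?_⟩
  · exact mul_nonneg (inv_oneSubOffDiag_apply_nonneg hnn hrow hdiag i j) (hnn j j)
  · simp only [sol, mulVec, dotProduct, mul_assoc]

/-- If the communication matrix `P` is row-stochastic with strictly positive
diagonal, then the fixed-point mixture equations
`ps i = P i i • pp i + Σ_{j ≠ i} P i j • ps j` have a unique solution given the physical
densities `pp i`, and each solution component is a convex combination of the physical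
densities (in particular, a probability density). -/
theorem social_density_unique_convex_combination
    (N : ℕ) (P : Matrix (Fin N) (Fin N) ℝ)
    (hnn : ∀ i j, 0 ≤ P i j) (hrow : ∀ i, ∑ j, P i j = 1) (hdiag : ∀ i, 0 < P i i)
    (pp : Fin N → ℝ → ℝ)
    (hpp : ∀ i, (∀ x, 0 ≤ pp i x) ∧ Integrable (pp i) ∧ (∫ x, pp i x) = 1) :
    (∃! ps : Fin N → ℝ → ℝ, ∀ i x,
        ps i x = P i i * pp i x + ∑ j ∈ Finset.univ.erase i, P i j * ps j x) ∧
      ∀ ps : Fin N → ℝ → ℝ,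
        (∀ i x, ps i x = P i i * pp i x + ∑ j ∈ Finset.univ.erase i, P i j * ps j x) →
        ∀ i, ∃ w : Fin N → ℝ, (∀ j, 0 ≤ w j) ∧ (∑ j, w j = 1) ∧
          ∀ x, ps i x = ∑ j, w j * pp j x :=
  social_density_unique_convex_combination_general N P hnn hrow hdiag pp
end
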